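/- Consider the controlled boat system on ℝ³ × ℝ³ with state (x, y, θ, ẋ, ẏ, θ̇), dynamics m ẍ = u sin θ + W¹, m ÿ = −u cos θ + W², I θ̈ = u, where W¹ = m d(sin²θ C¹ − sin θ cos θ C²)(q̇) and W² = m d(−sin θ cos θ C¹ + cos²θ C²)(q̇) for smooth functions C¹, C²: ℝ² → ℝ. With the feedback law û = −m θ̇ (cos θ ẋ + sin θ ẏ), the function φ(q, q̇) = sin θ ẋ − cos θ ẏ + cos θ C²(x, y) − sin θ C¹(x, y) is a first integral of the closed-loop system: its derivative along the closed-loop vector field Γ vanishes identically. -/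

import Mathlib

/-!
Write `ψ = sin θ · C¹ - cos θ · C²`. Then `W¹ = m (sin θ · ψ)˙` and `W² = -m (cos θ · ψ)˙`, and
since `sin² + cos² = 1` the combination `sin θ · W¹ - cos θ · W²` collapses to `m ψ̇`. Hence
`φ = (sin θ ẋ - cos θ ẏ) - ψ` has derivative `θ̇ (cos θ ẋ + sin θ ẏ) + û / m`, which the feedback
law makes vanish.
-/

open Real

theorem hasDerivAt_sin_mul_sub_cos_mul {θ a b : ℝ → ℝ} {θ' a' b' t : ℝ}
    (hθ : HasDerivAt θ θ' t) (ha : HasDerivAt a a' t) (hb : HasDerivAt b b' t) :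
    HasDerivAt (fun s => sin (θ s) * a s - cos (θ s) * b s)
      (θ' * (cos (θ t) * a t + sin (θ t) * b t) + (sin (θ t) * a' - cos (θ t) * b')) t :=
  ((hθ.sin.fun_mul ha).fun_sub (hθ.cos.fun_mul hb)).congr_deriv (by ring)

theorem sin_mul_deriv_sin_mul_add_cos_mul_deriv_cos_mul {θ ψ : ℝ → ℝ} {θ' ψ' t : ℝ}
    (hθ : HasDerivAt θ θ' t) (hψ : HasDerivAt ψ ψ' t) :
    sin (θ t) * deriv (fun s => sin (θ s) * ψ s) t
      + cos (θ t) * deriv (fun s => cos (θ s) * ψ s) t = ψ' := by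
  rw [(hθ.sin.fun_mul hψ).deriv, (hθ.cos.fun_mul hψ).deriv]
  linear_combination ψ' * sin_sq_add_cos_sq (θ t)

theorem stmt10_general (m : ℝ) (hm : 0 < m)
    (C1 C2 : ℝ × ℝ → ℝ)
    (x y θ vx vy vθ : ℝ → ℝ)
    (hθ : Differentiable ℝ θ)
    (hvx : Differentiable ℝ vx) (hvy : Differentiable ℝ vy)
    (hC1 : Differentiable ℝ fun t => C1 (x t, y t))
    (hC2 : Differentiable ℝ fun t => C2 (x t, y t))
    -- the feedback control and the current-induced forces
    (u W1 W2 : ℝ → ℝ)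
    (hu : ∀ t, u t = -m * vθ t * (cos (θ t) * vx t + sin (θ t) * vy t))
    (hW1 : ∀ t, W1 t = m * deriv
      (fun s => sin (θ s) ^ 2 * C1 (x s, y s) - sin (θ s) * cos (θ s) * C2 (x s, y s)) t)
    (hW2 : ∀ t, W2 t = m * deriv
      (fun s => -(sin (θ s) * cos (θ s)) * C1 (x s, y s) + cos (θ s) ^ 2 * C2 (x s, y s)) t)
    -- the closed-loop dynamics
    (hdθ : ∀ t, deriv θ t = vθ t)
    (hdvx : ∀ t, deriv vx t = (u t * sin (θ t) + W1 t) / m)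
    (hdvy : ∀ t, deriv vy t = (-(u t * cos (θ t)) + W2 t) / m) :
    ∀ t, deriv (fun s => sin (θ s) * vx s - cos (θ s) * vy s
      + cos (θ s) * C2 (x s, y s) - sin (θ s) * C1 (x s, y s)) t = 0 := by
  intro t
  set ψ := fun s => sin (θ s) * C1 (x s, y s) - cos (θ s) * C2 (x s, y s)
  have hθt : HasDerivAt θ (vθ t) t := hdθ t ▸ (hθ t).hasDerivAt
  have hψ : HasDerivAt ψ (deriv ψ t) t :=
    (((hθ.sin.mul hC1).sub (hθ.cos.mul hC2)) t).hasDerivAt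
  have hW1t : W1 t = m * deriv (fun s => sin (θ s) * ψ s) t := by
    rw [hW1 t]; congr 2; funext s; ring
  have hW2t : W2 t = -(m * deriv (fun s => cos (θ s) * ψ s) t) := by
    rw [hW2 t, ← mul_neg, ← deriv.fun_neg]; congr 2; funext s; ring
  have hlateral := hasDerivAt_sin_mul_sub_cos_mul hθt (hdvx t ▸ (hvx t).hasDerivAt)
    (hdvy t ▸ (hvy t).hasDerivAt)
  have hφ : (fun s => sin (θ s) * vx s - cos (θ s) * vy s
      + cos (θ s) * C2 (x s, y s) - sin (θ s) * C1 (x s, y s))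
      = fun s => (sin (θ s) * vx s - cos (θ s) * vy s) - ψ s := by
    funext s; ring
  have hforce : sin (θ t) * ((u t * sin (θ t) + W1 t) / m)
      - cos (θ t) * ((-(u t * cos (θ t)) + W2 t) / m) = u t / m + deriv ψ t := by
    rw [hW1t, hW2t]
    field_simp
    linear_combination u t * sin_sq_add_cos_sq (θ t)
      + m * sin_mul_deriv_sin_mul_add_cos_mul_deriv_cos_mul hθt hψ
  rw [hφ, (hlateral.fun_sub hψ).deriv, hforce, hu t]
  field_simp
  ring

/-- For the controlled boat system `m ẍ = u sin θ + W¹`, `m ÿ = -u cos θ + W²`,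
`I θ̈ = u` with `W¹ = m d(sin²θ C¹ - sin θ cos θ C²)(q̇)`,
`W² = m d(-sin θ cos θ C¹ + cos²θ C²)(q̇)`, and the feedback
`û = -m θ̇ (cos θ ẋ + sin θ ẏ)`, the function
`φ = sin θ ẋ - cos θ ẏ + cos θ C² - sin θ C¹` is a first integral of the closed-loop
system: its derivative along any solution curve vanishes identically. -/
theorem stmt10 (m I : ℝ) (hm : 0 < m) (hI : 0 < I)
    (C1 C2 : ℝ × ℝ → ℝ)
    (x y θ vx vy vθ : ℝ → ℝ)
    (hx : Differentiable ℝ x) (hy : Differentiable ℝ y) (hθ : Differentiable ℝ θ)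
    (hvx : Differentiable ℝ vx) (hvy : Differentiable ℝ vy) (hvθ : Differentiable ℝ vθ)
    (hC1 : Differentiable ℝ fun t => C1 (x t, y t))
    (hC2 : Differentiable ℝ fun t => C2 (x t, y t))
    -- the feedback control and the current-induced forces
    (u W1 W2 : ℝ → ℝ)
    (hu : ∀ t, u t = -m * vθ t * (cos (θ t) * vx t + sin (θ t) * vy t))
    (hW1 : ∀ t, W1 t = m * deriv
      (fun s => sin (θ s) ^ 2 * C1 (x s, y s) - sin (θ s) * cos (θ s) * C2 (x s, y s)) t)
    (hW2 : ∀ t, W2 t = m * deriv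
      (fun s => -(sin (θ s) * cos (θ s)) * C1 (x s, y s) + cos (θ s) ^ 2 * C2 (x s, y s)) t)
    -- the closed-loop dynamics
    (hdx : ∀ t, deriv x t = vx t) (hdy : ∀ t, deriv y t = vy t)
    (hdθ : ∀ t, deriv θ t = vθ t)
    (hdvx : ∀ t, deriv vx t = (u t * sin (θ t) + W1 t) / m)
    (hdvy : ∀ t, deriv vy t = (-(u t * cos (θ t)) + W2 t) / m)
    (hdvθ : ∀ t, deriv vθ t = u t / I) :
    ∀ t, deriv (fun s => sin (θ s) * vx s - cos (θ s) * vy s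
      + cos (θ s) * C2 (x s, y s) - sin (θ s) * C1 (x s, y s)) t = 0 :=
  stmt10_general m hm C1 C2 x y θ vx vy vθ hθ hvx hvy hC1 hC2 u W1 W2 hu hW1 hW2 hdθ hdvx hdvy
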